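/- arXiv:1906.00345 — 13 statements merged into one kernel-verified Lean document; each statement's English description precedes it below -/
import Mathlib

section
/- For the triangle with sides a = k(m²+n²)/(mn), b = k(p²+q²)/(pq), c = k(pn+qm)(pm−qn)/(pqmn), where k,m,n,p,q are rational with mnpq ≠ 0, the Heron expression s(s−a)(s−b)(s−c) with s=(a+b+c)/2 equals (k²(pn+qm)(pm−qn)/(pqmn))², i.e., the area of the triangle is k²(pn+qm)(pm−qn)/(pqmn). -/
/-!
With `x = m / n` and `y = p / q` the sides become `a = k (x + 1/x)`, `b = k (y + 1/y)` and
`c = k ((x - 1/x) + (y - 1/y))`, so the semiperimeter and its differences with the sides factor: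
`s = k (x + y)`, `s - a = k (y - 1/x)`, `s - b = k (x - 1/y)`, `s - c = k (1/x + 1/y)`.
Pairing them, `(x + y)(1/x + 1/y) = (x + y)² / (x y)` and `(y - 1/x)(x - 1/y) = (x y - 1)² / (x y)`,
so Heron's product is the square of `k² (x + y)(x y - 1) / (x y) = k² ((x - 1/x) + (y - 1/y))`.
-/

section Field

variable {K : Type*} [Field K]

theorem div_add_inv_div {m n : K} (hm : m ≠ 0) (hn : n ≠ 0) :
    m / n + (m / n)⁻¹ = (m ^ 2 + n ^ 2) / (m * n) := by
  field_simp

theorem div_sub_inv_div_add_div_sub_inv_div {m n p q : K} (hm : m ≠ 0) (hn : n ≠ 0)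
    (hp : p ≠ 0) (hq : q ≠ 0) :
    m / n - (m / n)⁻¹ + (p / q - (p / q)⁻¹) =
      (p * n + q * m) * (p * m - q * n) / (p * q * m * n) := by
  field_simp
  ring

theorem heron_product_euler [NeZero (2 : K)] {k x y a b c s : K} (hx : x ≠ 0) (hy : y ≠ 0)
    (ha : a = k * (x + x⁻¹)) (hb : b = k * (y + y⁻¹)) (hc : c = k * (x - x⁻¹ + (y - y⁻¹)))
    (hs : s = (a + b + c) / 2) :
    s * (s - a) * (s - b) * (s - c) = (k ^ 2 * (x - x⁻¹ + (y - y⁻¹))) ^ 2 := by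
  have hs' : s = k * (x + y) := by
    rw [hs, ha, hb, hc, div_eq_iff two_ne_zero]
    ring
  have hsum : (x + y) * (x⁻¹ + y⁻¹) = (x + y) ^ 2 / (x * y) := by
    field_simp
    ring
  have hdiff : (y - x⁻¹) * (x - y⁻¹) = (x * y - 1) ^ 2 / (x * y) := by
    field_simp
  calc s * (s - a) * (s - b) * (s - c)
      = k ^ 4 * ((x + y) * (x⁻¹ + y⁻¹)) * ((y - x⁻¹) * (x - y⁻¹)) := by
        rw [hs', ha, hb, hc]
        ring
    _ = k ^ 4 * ((x + y) ^ 2 / (x * y)) * ((x * y - 1) ^ 2 / (x * y)) := by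
        rw [hsum, hdiff]
    _ = (k ^ 2 * (x - x⁻¹ + (y - y⁻¹))) ^ 2 := by
        field_simp
        ring

end Field

theorem euler_triangle_area (k m n p q a b c s : ℚ)
    (hmnpq : m * n * p * q ≠ 0)
    (ha : a = k * (m^2 + n^2) / (m * n))
    (hb : b = k * (p^2 + q^2) / (p * q))
    (hc : c = k * (p * n + q * m) * (p * m - q * n) / (p * q * m * n))
    (hs : s = (a + b + c) / 2) :
    s * (s - a) * (s - b) * (s - c) =
      (k^2 * (p * n + q * m) * (p * m - q * n) / (p * q * m * n))^2 := by
  simp only [mul_ne_zero_iff] at hmnpq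
  obtain ⟨⟨⟨hm, hn⟩, hp⟩, hq⟩ := hmnpq
  have hcross := div_sub_inv_div_add_div_sub_inv_div hm hn hp hq
  rw [mul_div_assoc, ← div_add_inv_div hm hn] at ha
  rw [mul_div_assoc, ← div_add_inv_div hp hq] at hb
  rw [mul_assoc, mul_div_assoc, ← hcross] at hc
  rw [heron_product_euler (div_ne_zero hm hn) (div_ne_zero hp hq) ha hb hc hs, hcross]
  ring
end

section
/- For the triangle with sides a = k(m²+n²)/(mn), b = k(p²+q²)/(pq), c = k(pn+qm)(pm−qn)/(pqmn), where k,m,n,p,q are rational with mnpq ≠ 0, the circumradius R = abc/√((a+b+c)(a+b−c)(b+c−a)(c+a−b)) equals k(m²+n²)(p²+q²)/(4mnpq); equivalently, (abc)² = (k(m²+n²)(p²+q²)/(4mnpq))² · (a+b+c)(a+b−c)(b+c−a)(c+a−b). -/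
/-!
Euler's triangle is the triangle with angles `A`, `B` whose half-angle tangents are `q / p` and
`n / m`, scaled so that its circumradius is `R = k (m² + n²) (p² + q²) / (4 m n p q)`: the sides
are `a = 2 R sin A`, `b = 2 R sin B`, `c = 2 R sin (A + B)`, all rational. The law of sines then
gives the claim, once one checks, purely algebraically, that Heron's product
`(a + b + c) (a + b - c) (b + c - a) (c + a - b) = 16 Δ²` equals `(2 a b sin C)²`.
-/

section CommRing

variable {R : Type*} [CommRing R]

def heronProduct (a b c : R) : R :=
  (a + b + c) * (a + b - c) * (b + c - a) * (c + a - b)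

theorem heronProduct_eq_sq_sub_sq (a b c : R) :
    heronProduct a b c = (2 * a * b) ^ 2 - (a ^ 2 + b ^ 2 - c ^ 2) ^ 2 := by
  unfold heronProduct
  ring

theorem heronProduct_eq_of_law_of_cosines {a b c s t : R} (hst : s ^ 2 + t ^ 2 = 1)
    (hc : c ^ 2 = a ^ 2 + b ^ 2 - 2 * a * b * t) :
    heronProduct a b c = (2 * a * b * s) ^ 2 := by
  rw [heronProduct_eq_sq_sub_sq, hc]
  linear_combination -(2 * a * b) ^ 2 * hst

theorem sq_add_sq_angle_add {sA cA sB cB : R} (hA : sA ^ 2 + cA ^ 2 = 1)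
    (hB : sB ^ 2 + cB ^ 2 = 1) :
    (sA * cB + cA * sB) ^ 2 + (sA * sB - cA * cB) ^ 2 = 1 := by
  linear_combination (sB ^ 2 + cB ^ 2) * hA + hB

theorem sq_mul_mul_eq_sq_mul_heronProduct {r sA cA sB cB a b c : R}
    (hA : sA ^ 2 + cA ^ 2 = 1) (hB : sB ^ 2 + cB ^ 2 = 1)
    (ha : a = 2 * r * sA) (hb : b = 2 * r * sB) (hc : c = 2 * r * (sA * cB + cA * sB)) :
    (a * b * c) ^ 2 = r ^ 2 * heronProduct a b c := by
  have law_of_cosines : c ^ 2 = a ^ 2 + b ^ 2 - 2 * a * b * (sA * sB - cA * cB) := by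
    subst ha hb hc
    linear_combination (4 * r ^ 2 * sA ^ 2) * hB + (4 * r ^ 2 * sB ^ 2) * hA
  rw [heronProduct_eq_of_law_of_cosines (sq_add_sq_angle_add hA hB) law_of_cosines]
  subst ha hb hc
  ring

end CommRing

section Field

variable {K : Type*} [Field K]

-- Sine and cosine of the angle `θ` with `tan (θ / 2) = q / p`.
def circleSin (p q : K) : K := 2 * p * q / (p ^ 2 + q ^ 2)

def circleCos (p q : K) : K := (p ^ 2 - q ^ 2) / (p ^ 2 + q ^ 2)

theorem circleSin_sq_add_circleCos_sq {p q : K} (h : p ^ 2 + q ^ 2 ≠ 0) :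
    circleSin p q ^ 2 + circleCos p q ^ 2 = 1 := by
  unfold circleSin circleCos
  field_simp
  ring

end Field

theorem euler_triangle_circumradius (k m n p q a b c : ℚ)
    (hmnpq : m * n * p * q ≠ 0)
    (ha : a = k * (m^2 + n^2) / (m * n))
    (hb : b = k * (p^2 + q^2) / (p * q))
    (hc : c = k * (p * n + q * m) * (p * m - q * n) / (p * q * m * n)) :
    (a * b * c)^2 =
      (k * (m^2 + n^2) * (p^2 + q^2) / (4 * m * n * p * q))^2 *
        ((a + b + c) * (a + b - c) * (b + c - a) * (c + a - b)) := by
  obtain ⟨⟨⟨hm, hn⟩, hp⟩, hq⟩ : ((m ≠ 0 ∧ n ≠ 0) ∧ p ≠ 0) ∧ q ≠ 0 := by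
    simpa only [mul_ne_zero_iff] using hmnpq
  have hpq : p ^ 2 + q ^ 2 ≠ 0 := by positivity
  have hmn : m ^ 2 + n ^ 2 ≠ 0 := by positivity
  refine sq_mul_mul_eq_sq_mul_heronProduct (circleSin_sq_add_circleCos_sq hpq)
    (circleSin_sq_add_circleCos_sq hmn) ?_ ?_ ?_ <;>
  · simp only [ha, hb, hc, circleSin, circleCos]
    field_simp
    ring
end

section
/- For Sastry's cyclic quadrilateral with sides a₁ = (t(u+v)+(1−uv))(u+v−t(1−uv)), a₂ = (1+u²)(v−t)(1+tv), a₃ = t(1+u²)(1+v²), a₄ = (1+v²)(u−t)(1+tu), the Brahmagupta area expression (s−a₁)(s−a₂)(s−a₃)(s−a₄) with s=(a₁+a₂+a₃+a₄)/2 equals K² where K = uv(2t(1−uv)−(u+v)(1−t²))(2(u+v)t+(1−uv)(1−t²)). -/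
/-!
With `P = 2t(1 - uv) - (u + v)(1 - t²)` and `Q = 2(u + v)t + (1 - uv)(1 - t²)`, so that `K = uvPQ`,
each factor of Brahmagupta's product splits into these pieces:
`s - a₁ = -uvP`, `s - a₂ = uQ`, `s - a₃ = -P`, `s - a₄ = vQ`.
Their product is `u²v²P²Q² = K²`.
-/

namespace SastryQuadrilateral

variable {K : Type*} [Field K] (t u v : K)

def side₁ : K := (t * (u + v) + (1 - u * v)) * (u + v - t * (1 - u * v))

def side₂ : K := (1 + u ^ 2) * (v - t) * (1 + t * v)

def side₃ : K := t * (1 + u ^ 2) * (1 + v ^ 2)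

def side₄ : K := (1 + v ^ 2) * (u - t) * (1 + t * u)

def semiperimeter : K := (side₁ t u v + side₂ t u v + side₃ t u v + side₄ t u v) / 2

def factorP : K := 2 * t * (1 - u * v) - (u + v) * (1 - t ^ 2)

def factorQ : K := 2 * (u + v) * t + (1 - u * v) * (1 - t ^ 2)

def area : K := u * v * factorP t u v * factorQ t u v

variable [NeZero (2 : K)]

theorem semiperimeter_sub_side₁ :
    semiperimeter t u v - side₁ t u v = -(u * v * factorP t u v) := by
  unfold semiperimeter side₁ side₂ side₃ side₄ factorP
  field_simp
  ring

theorem semiperimeter_sub_side₂ : semiperimeter t u v - side₂ t u v = u * factorQ t u v := by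
  unfold semiperimeter side₁ side₂ side₃ side₄ factorQ
  field_simp
  ring

theorem semiperimeter_sub_side₃ : semiperimeter t u v - side₃ t u v = -factorP t u v := by
  unfold semiperimeter side₁ side₂ side₃ side₄ factorP
  field_simp
  ring

theorem semiperimeter_sub_side₄ : semiperimeter t u v - side₄ t u v = v * factorQ t u v := by
  unfold semiperimeter side₁ side₂ side₃ side₄ factorQ
  field_simp
  ring

theorem brahmagupta_product_eq_area_sq :
    (semiperimeter t u v - side₁ t u v) * (semiperimeter t u v - side₂ t u v) *
      (semiperimeter t u v - side₃ t u v) * (semiperimeter t u v - side₄ t u v) =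
      area t u v ^ 2 := by
  rw [semiperimeter_sub_side₁, semiperimeter_sub_side₂, semiperimeter_sub_side₃,
    semiperimeter_sub_side₄, area]
  ring

end SastryQuadrilateral

theorem sastry_quadrilateral_area (t u v a1 a2 a3 a4 s K : ℚ)
    (ha1 : a1 = (t * (u + v) + (1 - u * v)) * (u + v - t * (1 - u * v)))
    (ha2 : a2 = (1 + u^2) * (v - t) * (1 + t * v))
    (ha3 : a3 = t * (1 + u^2) * (1 + v^2))
    (ha4 : a4 = (1 + v^2) * (u - t) * (1 + t * u))
    (hs : s = (a1 + a2 + a3 + a4) / 2)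
    (hK : K = u * v * (2 * t * (1 - u * v) - (u + v) * (1 - t^2)) *
      (2 * (u + v) * t + (1 - u * v) * (1 - t^2))) :
    (s - a1) * (s - a2) * (s - a3) * (s - a4) = K^2 := by
  subst ha1 ha2 ha3 ha4 hs hK
  exact SastryQuadrilateral.brahmagupta_product_eq_area_sq t u v
end

section
/- For Sastry's cyclic quadrilateral with sides a₁ = (t(u+v)+(1−uv))(u+v−t(1−uv)), a₂ = (1+u²)(v−t)(1+tv), a₃ = t(1+u²)(1+v²), a₄ = (1+v²)(u−t)(1+tu), Paramesvara's circumradius formula yields R = (1+t²)(1+u²)(1+v²)/4; equivalently, (a₁a₂+a₃a₄)(a₁a₃+a₂a₄)(a₁a₄+a₂a₃) = R² · (−a₁+a₂+a₃+a₄)(a₁−a₂+a₃+a₄)(a₁+a₂−a₃+a₄)(a₁+a₂+a₃−a₄). -/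
theorem sastry_sides_paramesvara_identity {K : Type*} [CommRing K] {t u v a1 a2 a3 a4 : K}
    (ha1 : a1 = (t * (u + v) + (1 - u * v)) * (u + v - t * (1 - u * v)))
    (ha2 : a2 = (1 + u^2) * (v - t) * (1 + t * v))
    (ha3 : a3 = t * (1 + u^2) * (1 + v^2))
    (ha4 : a4 = (1 + v^2) * (u - t) * (1 + t * u)) :
    16 * ((a1 * a2 + a3 * a4) * (a1 * a3 + a2 * a4) * (a1 * a4 + a2 * a3)) =
      ((1 + t^2) * (1 + u^2) * (1 + v^2))^2 * ((-a1 + a2 + a3 + a4) * (a1 - a2 + a3 + a4) *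
        (a1 + a2 - a3 + a4) * (a1 + a2 + a3 - a4)) := by
  subst ha1 ha2 ha3 ha4
  ring

theorem sastry_quadrilateral_circumradius (t u v a1 a2 a3 a4 R : ℚ)
    (ha1 : a1 = (t * (u + v) + (1 - u * v)) * (u + v - t * (1 - u * v)))
    (ha2 : a2 = (1 + u^2) * (v - t) * (1 + t * v))
    (ha3 : a3 = t * (1 + u^2) * (1 + v^2))
    (ha4 : a4 = (1 + v^2) * (u - t) * (1 + t * u))
    (hR : R = (1 + t^2) * (1 + u^2) * (1 + v^2) / 4) :
    (a1 * a2 + a3 * a4) * (a1 * a3 + a2 * a4) * (a1 * a4 + a2 * a3) =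
      R^2 * ((-a1 + a2 + a3 + a4) * (a1 - a2 + a3 + a4) *
        (a1 + a2 - a3 + a4) * (a1 + a2 + a3 - a4)) := by
  subst hR
  linear_combination sastry_sides_paramesvara_identity ha1 ha2 ha3 ha4 / 16
end

section
/- If rational numbers k,m,n,p,q,t,u,v with mnpq ≠ 0 and q ≠ 0, m²+n² ≠ 0 satisfy t = p/q and k = pmn(u²+1)(v²+1)/(q(m²+n²)), then both equations k(m²+n²)(p²+q²)/(4mnpq) = (t²+1)(u²+1)(v²+1)/4 and k(m²+n²)/(mn) = t(u²+1)(v²+1) hold. -/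
/-!
The second equation is just the defining formula for `k` solved back: the factor
`m * n / (m^2 + n^2)` cancels, leaving `(p / q) * (u^2 + 1) * (v^2 + 1)`.
The first equation is the second one multiplied by `(p^2 + q^2) / (4 * p * q)`, because
`(p / q) * (p^2 + q^2) / (p * q) = (p / q)^2 + 1`.
-/

section Field

variable {K : Type*} [Field K]

theorem mul_sq_add_sq_div_mul_eq_div_sq_add_one {p q : K} (hp : p ≠ 0) (hq : q ≠ 0) :
    p / q * ((p^2 + q^2) / (p * q)) = (p / q)^2 + 1 := by
  field_simp

theorem mul_sq_add_sq_div_mul_eq_of_eq_div {k m n p q a : K} (hm : m ≠ 0) (hn : n ≠ 0)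
    (hmn : m^2 + n^2 ≠ 0) (hk : k = p * m * n * a / (q * (m^2 + n^2))) :
    k * (m^2 + n^2) / (m * n) = p / q * a := by
  subst hk
  field_simp

end Field

theorem pentagon_matching_conditions_general (k m n p q t u v : ℚ)
    (hmnpq : m * n * p * q ≠ 0)
    (ht : t = p / q)
    (hk : k = p * m * n * (u^2 + 1) * (v^2 + 1) / (q * (m^2 + n^2))) :
    k * (m^2 + n^2) * (p^2 + q^2) / (4 * m * n * p * q) =
      (t^2 + 1) * (u^2 + 1) * (v^2 + 1) / 4 ∧
    k * (m^2 + n^2) / (m * n) = t * (u^2 + 1) * (v^2 + 1) := by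
  simp only [mul_ne_zero_iff] at hmnpq
  obtain ⟨⟨⟨hm, hn⟩, hp⟩, hq⟩ := hmnpq
  have hmn : m^2 + n^2 ≠ 0 := by positivity
  have hsecond : k * (m^2 + n^2) / (m * n) = p / q * ((u^2 + 1) * (v^2 + 1)) :=
    mul_sq_add_sq_div_mul_eq_of_eq_div hm hn hmn (by rw [hk]; ring)
  subst ht
  refine ⟨?_, by rw [hsecond]; ring⟩
  calc k * (m^2 + n^2) * (p^2 + q^2) / (4 * m * n * p * q)
      = k * (m^2 + n^2) / (m * n) * ((p^2 + q^2) / (p * q)) / 4 := by ring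
    _ = p / q * ((p^2 + q^2) / (p * q)) * (u^2 + 1) * (v^2 + 1) / 4 := by rw [hsecond]; ring
    _ = ((p / q)^2 + 1) * (u^2 + 1) * (v^2 + 1) / 4 := by
      rw [mul_sq_add_sq_div_mul_eq_div_sq_add_one hp hq]

theorem pentagon_matching_conditions (k m n p q t u v : ℚ)
    (hmnpq : m * n * p * q ≠ 0) (hq : q ≠ 0) (hmn : m^2 + n^2 ≠ 0)
    (ht : t = p / q)
    (hk : k = p * m * n * (u^2 + 1) * (v^2 + 1) / (q * (m^2 + n^2))) :
    k * (m^2 + n^2) * (p^2 + q^2) / (4 * m * n * p * q) =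
      (t^2 + 1) * (u^2 + 1) * (v^2 + 1) / 4 ∧
    k * (m^2 + n^2) / (m * n) = t * (u^2 + 1) * (v^2 + 1) :=
  pentagon_matching_conditions_general k m n p q t u v hmnpq ht hk
end

section
/- Let s₁ = (−quv+pu+pv+q)(puv+qu+qv−p)/q², s₂ = (u²+1)(qv−p)(pv+q)/q², s₃ = mn(u²+1)(v²+1)(p²+q²)/(q²(m²+n²)), s₄ = (u²+1)(v²+1)(mq+np)(mp−nq)/(q²(m²+n²)), s₅ = (v²+1)(qu−p)(pu+q)/q², and d = (p²+q²)(v²+1)(mu−n)(nu+m)/((m²+n²)q²), and R = (u²+1)(v²+1)(p²+q²)/(4q²). Then the triangle with sides d, s₄, s₅ has circumradius R, i.e., (d·s₄·s₅)² = R²·(d+s₄+s₅)(d+s₄−s₅)(s₄+s₅−d)(s₅+d−s₄). -/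
/-!
With α, β, γ the arguments of `m + n i`, `p + q i`, `u + i`, one has `d = 2R sin 2(α + γ)`,
`s₄ = 2R sin 2(α + β)` and `s₅ = 2R sin 2(β - γ)`. Since `2(α + β) = 2(α + γ) + 2(β - γ)`,
these are the sides of a triangle with circumradius `R` by the extended law of sines.
Algebraically: `d`, `s₄`, `s₅`, `R` share the factor `(v² + 1) / (4q²(m² + n²))`, the
circumradius relation is homogeneous of degree 6, and what remains is a polynomial identity
in `m, n, p, q, u`.
-/

def IsCircumradius {K : Type*} [CommRing K] (a b c r : K) : Prop :=
  (a * b * c) ^ 2 = r ^ 2 * ((a + b + c) * (a + b - c) * (b + c - a) * (c + a - b))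

theorem IsCircumradius.mul_right {K : Type*} [CommRing K] {a b c r : K}
    (h : IsCircumradius a b c r) (k : K) :
    IsCircumradius (a * k) (b * k) (c * k) (r * k) := by
  unfold IsCircumradius at *
  linear_combination k ^ 6 * h

theorem isCircumradius_pentagon_ADE {K : Type*} [CommRing K] (m n p q u : K) :
    IsCircumradius (4 * (p ^ 2 + q ^ 2) * (m * u - n) * (n * u + m))
      (4 * (u ^ 2 + 1) * (m * q + n * p) * (m * p - n * q))
      (4 * (m ^ 2 + n ^ 2) * (q * u - p) * (p * u + q))
      ((m ^ 2 + n ^ 2) * (u ^ 2 + 1) * (p ^ 2 + q ^ 2)) := by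
  unfold IsCircumradius
  ring

theorem pentagon_diagonal_AD_triangle_general (m n p q u v s4 s5 d R : ℚ)
    (hmn : m^2 + n^2 ≠ 0)
    (hs4 : s4 = (u^2 + 1) * (v^2 + 1) * (m * q + n * p) * (m * p - n * q) /
      (q^2 * (m^2 + n^2)))
    (hs5 : s5 = (v^2 + 1) * (q * u - p) * (p * u + q) / q^2)
    (hd : d = (p^2 + q^2) * (v^2 + 1) * (m * u - n) * (n * u + m) /
      ((m^2 + n^2) * q^2))
    (hR : R = (u^2 + 1) * (v^2 + 1) * (p^2 + q^2) / (4 * q^2)) :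
    (d * s4 * s5)^2 =
      R^2 * ((d + s4 + s5) * (d + s4 - s5) * (s4 + s5 - d) * (s5 + d - s4)) := by
  set k : ℚ := (v ^ 2 + 1) / (4 * q ^ 2 * (m ^ 2 + n ^ 2)) with hk
  have hd' : d = 4 * (p ^ 2 + q ^ 2) * (m * u - n) * (n * u + m) * k := by
    rw [hd, hk]; field_simp
  have hs4' : s4 = 4 * (u ^ 2 + 1) * (m * q + n * p) * (m * p - n * q) * k := by
    rw [hs4, hk]; field_simp
  have hs5' : s5 = 4 * (m ^ 2 + n ^ 2) * (q * u - p) * (p * u + q) * k := by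
    rw [hs5, hk]; field_simp
  have hR' : R = (m ^ 2 + n ^ 2) * (u ^ 2 + 1) * (p ^ 2 + q ^ 2) * k := by
    rw [hR, hk]; field_simp
  rw [hd', hs4', hs5', hR']
  exact (isCircumradius_pentagon_ADE m n p q u).mul_right k

theorem pentagon_diagonal_AD_triangle (m n p q u v s4 s5 d R : ℚ)
    (hq : q ≠ 0) (hmn : m^2 + n^2 ≠ 0)
    (hs4 : s4 = (u^2 + 1) * (v^2 + 1) * (m * q + n * p) * (m * p - n * q) /
      (q^2 * (m^2 + n^2)))
    (hs5 : s5 = (v^2 + 1) * (q * u - p) * (p * u + q) / q^2)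
    (hd : d = (p^2 + q^2) * (v^2 + 1) * (m * u - n) * (n * u + m) /
      ((m^2 + n^2) * q^2))
    (hR : R = (u^2 + 1) * (v^2 + 1) * (p^2 + q^2) / (4 * q^2)) :
    (d * s4 * s5)^2 =
      R^2 * ((d + s4 + s5) * (d + s4 - s5) * (s4 + s5 - d) * (s5 + d - s4)) :=
  pentagon_diagonal_AD_triangle_general m n p q u v s4 s5 d R hmn hs4 hs5 hd hR
end

section
/- With s₁ = (−quv+pu+pv+q)(puv+qu+qv−p)/q², s₂ = (u²+1)(qv−p)(pv+q)/q², s₃ = mn(u²+1)(v²+1)(p²+q²)/(q²(m²+n²)), d = (p²+q²)(v²+1)(mu−n)(nu+m)/((m²+n²)q²), and R = (u²+1)(v²+1)(p²+q²)/(4q²), where m,n,p,q,u,v are rationals with q ≠ 0 and m²+n² ≠ 0, the cyclic quadrilateral relation (s₁s₂+s₃d)(s₁s₃+s₂d)(s₁d+s₂s₃) = 16R²·(−s₁+s₂+s₃+d)(s₁−s₂+s₃+d)(s₁+s₂−s₃+d)(s₁+s₂+s₃−d)/16 holds, i.e., Paramesvara's circumradius condition for quadrilateral ABCD with sides s₁,s₂,s₃,d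 and circumradius R is satisfied. -/
/-!
Write each side of a quadrilateral inscribed in a circle of radius `R` as a chord
`2R sin θₖ = 2R Im zₖ` with `zₖ = exp (i θₖ)`, where the half central angles satisfy
`θ₁ + θ₂ + θ₃ + θ₄ = π`, i.e. `z₁ z₂ z₃ z₄ = -1`. Since `2i Im z = z - z⁻¹` on the unit circle,
Paramesvara's relation becomes the Laurent polynomial identity
`(t₁t₂ + t₃t₄)(t₁t₃ + t₂t₄)(t₁t₄ + t₂t₃) + ∏ₖ (t₁ + t₂ + t₃ + t₄ - 2tₖ) = 0` for `tₖ = xₖ - xₖ⁻¹`,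
`x₁x₂x₃x₄ = -1`, valid in any field. The sides of the parametrized pentagon are chords of this
form with `zₖ = wₖ / conj wₖ`, for explicit `wₖ` whose product is purely imaginary.
-/

open Complex ComplexConjugate

theorem sub_inv_parameshvara_identity {K : Type*} [Field K] {x₁ x₂ x₃ x₄ t₁ t₂ t₃ t₄ : K}
    (h₁ : x₁ ≠ 0) (h₂ : x₂ ≠ 0) (h₃ : x₃ ≠ 0) (hprod : x₁ * x₂ * x₃ * x₄ = -1)
    (ht₁ : t₁ = x₁ - x₁⁻¹) (ht₂ : t₂ = x₂ - x₂⁻¹) (ht₃ : t₃ = x₃ - x₃⁻¹)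
    (ht₄ : t₄ = x₄ - x₄⁻¹) :
    (t₁ * t₂ + t₃ * t₄) * (t₁ * t₃ + t₂ * t₄) * (t₁ * t₄ + t₂ * t₃) +
      (-t₁ + t₂ + t₃ + t₄) * (t₁ - t₂ + t₃ + t₄) * (t₁ + t₂ - t₃ + t₄) *
        (t₁ + t₂ + t₃ - t₄) = 0 := by
  have hx₄ : x₄ = -(x₁ * x₂ * x₃)⁻¹ := by
    rw [eq_neg_iff_add_eq_zero, ← mul_right_inj' (mul_ne_zero (mul_ne_zero h₁ h₂) h₃)]
    field_simp
    linear_combination hprod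
  subst hx₄ ht₁ ht₂ ht₃ ht₄
  field_simp
  ring

theorem parameshvara_of_sub_inv {K : Type*} [Field K] {x₁ x₂ x₃ x₄ k R a b c d : K}
    (h₁ : x₁ ≠ 0) (h₂ : x₂ ≠ 0) (h₃ : x₃ ≠ 0) (hprod : x₁ * x₂ * x₃ * x₄ = -1)
    (hR : R ^ 2 = -k ^ 2)
    (ha : a = k * (x₁ - x₁⁻¹)) (hb : b = k * (x₂ - x₂⁻¹)) (hc : c = k * (x₃ - x₃⁻¹))
    (hd : d = k * (x₄ - x₄⁻¹)) :
    (a * b + c * d) * (a * c + b * d) * (a * d + b * c) =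
      R ^ 2 * ((-a + b + c + d) * (a - b + c + d) * (a + b - c + d) * (a + b + c - d)) := by
  have key := sub_inv_parameshvara_identity h₁ h₂ h₃ hprod rfl rfl rfl rfl
  generalize x₁ - x₁⁻¹ = t₁, x₂ - x₂⁻¹ = t₂, x₃ - x₃⁻¹ = t₃, x₄ - x₄⁻¹ = t₄ at key ha hb hc hd
  subst ha hb hc hd
  rw [hR]
  linear_combination k ^ 6 * key

theorem parameshvara_of_unit_circle {z₁ z₂ z₃ z₄ : ℂ} (h₁ : ‖z₁‖ = 1) (h₂ : ‖z₂‖ = 1)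
    (h₃ : ‖z₃‖ = 1) (h₄ : ‖z₄‖ = 1) (hprod : z₁ * z₂ * z₃ * z₄ = -1) {R a b c d : ℝ}
    (ha : a = 2 * R * z₁.im) (hb : b = 2 * R * z₂.im) (hc : c = 2 * R * z₃.im)
    (hd : d = 2 * R * z₄.im) :
    (a * b + c * d) * (a * c + b * d) * (a * d + b * c) =
      R ^ 2 * ((-a + b + c + d) * (a - b + c + d) * (a + b - c + d) * (a + b + c - d)) := by
  have chord {z : ℂ} (hz : ‖z‖ = 1) : ((2 * R * z.im : ℝ) : ℂ) = -(R * I) * (z - z⁻¹) := by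
    rw [inv_eq_conj hz]
    push_cast
    rw [im_eq_sub_conj]
    field_simp
    linear_combination (z - conj z) * R * I_sq
  have ne_zero_of_norm {z : ℂ} (hz : ‖z‖ = 1) : z ≠ 0 := ne_zero_of_norm_ne_zero (hz ▸ one_ne_zero)
  apply ofReal_injective
  push_cast
  exact parameshvara_of_sub_inv (k := -(R * I)) (ne_zero_of_norm h₁) (ne_zero_of_norm h₂)
    (ne_zero_of_norm h₃) hprod
    (by linear_combination (R : ℂ) ^ 2 * I_sq)
    (by rw [ha, chord h₁]) (by rw [hb, chord h₂]) (by rw [hc, chord h₃]) (by rw [hd, chord h₄])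

theorem norm_div_conj_self {w : ℂ} (hw : w ≠ 0) : ‖w / conj w‖ = 1 := by
  rw [norm_div, norm_conj, div_self (norm_ne_zero_iff.mpr hw)]

theorem im_div_conj_self (w : ℂ) : (w / conj w).im = 2 * w.re * w.im / normSq w := by
  simp only [div_im, conj_re, conj_im, normSq_conj]
  ring

theorem div_conj_self_eq_neg_one {w : ℂ} (hw : w ≠ 0) (hre : w.re = 0) : w / conj w = -1 := by
  have : conj w = -w := by apply Complex.ext <;> simp [hre]
  rw [this, div_neg, div_self hw]

theorem parameshvara_of_pentagon_parametrization {m n p q u v s1 s2 s3 d R : ℝ}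
    (hq : q ≠ 0) (hmn : m ^ 2 + n ^ 2 ≠ 0)
    (hs1 : s1 = (-(q * u * v) + p * u + p * v + q) * (p * u * v + q * u + q * v - p) / q ^ 2)
    (hs2 : s2 = (u ^ 2 + 1) * (q * v - p) * (p * v + q) / q ^ 2)
    (hs3 : s3 = m * n * (u ^ 2 + 1) * (v ^ 2 + 1) * (p ^ 2 + q ^ 2) / (q ^ 2 * (m ^ 2 + n ^ 2)))
    (hd : d = (p ^ 2 + q ^ 2) * (v ^ 2 + 1) * (m * u - n) * (n * u + m) / ((m ^ 2 + n ^ 2) * q ^ 2))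
    (hR : R = (u ^ 2 + 1) * (v ^ 2 + 1) * (p ^ 2 + q ^ 2) / (4 * q ^ 2)) :
    (s1 * s2 + s3 * d) * (s1 * s3 + s2 * d) * (s1 * d + s2 * s3) =
      R ^ 2 * ((-s1 + s2 + s3 + d) * (s1 - s2 + s3 + d) * (s1 + s2 - s3 + d) *
        (s1 + s2 + s3 - d)) := by
  -- `w₁ = (1 + ui)(1 + vi)(q - pi)`, `w₂ = i conj ((1 + vi)(q - pi))`, `w₃ = n + mi` and
  -- `w₄ = -conj ((1 + ui) w₃)`, so `w₁w₂w₃w₄ = -i |w₁|² |w₃|²` is purely imaginary.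
  set w₁ : ℂ := ⟨-(q * u * v) + p * u + p * v + q, p * u * v + q * u + q * v - p⟩
  set w₂ : ℂ := ⟨q * v - p, p * v + q⟩
  set w₃ : ℂ := ⟨n, m⟩
  set w₄ : ℂ := ⟨m * u - n, n * u + m⟩
  have hN₁ : normSq w₁ = (u ^ 2 + 1) * (v ^ 2 + 1) * (p ^ 2 + q ^ 2) := by
    rw [normSq_mk]; ring
  have hN₂ : normSq w₂ = (v ^ 2 + 1) * (p ^ 2 + q ^ 2) := by rw [normSq_mk]; ring
  have hN₃ : normSq w₃ = m ^ 2 + n ^ 2 := by rw [normSq_mk]; ring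
  have hN₄ : normSq w₄ = (u ^ 2 + 1) * (m ^ 2 + n ^ 2) := by rw [normSq_mk]; ring
  have ne_zero_of_normSq {w : ℂ} {N : ℝ} (h : normSq w = N) (hN : N ≠ 0) : w ≠ 0 :=
    fun hw => hN (by rw [← h, hw, map_zero])
  have hw₁ := ne_zero_of_normSq hN₁ (by positivity)
  have hw₂ := ne_zero_of_normSq hN₂ (by positivity)
  have hw₃ := ne_zero_of_normSq hN₃ hmn
  have hw₄ := ne_zero_of_normSq hN₄ (by positivity)
  have hre : (w₁ * w₂ * w₃ * w₄).re = 0 := by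
    simp only [w₁, w₂, w₃, w₄, mul_re, mul_im]; ring
  have hprod : w₁ / conj w₁ * (w₂ / conj w₂) * (w₃ / conj w₃) * (w₄ / conj w₄) = -1 := by
    have hw : w₁ * w₂ * w₃ * w₄ ≠ 0 := mul_ne_zero (mul_ne_zero (mul_ne_zero hw₁ hw₂) hw₃) hw₄
    rw [← div_conj_self_eq_neg_one hw hre]
    simp only [map_mul]
    ring
  refine parameshvara_of_unit_circle (norm_div_conj_self hw₁) (norm_div_conj_self hw₂)
    (norm_div_conj_self hw₃) (norm_div_conj_self hw₄) hprod ?_ ?_ ?_ ?_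
  · rw [im_div_conj_self, hN₁, hs1, hR]; field_simp; ring
  · rw [im_div_conj_self, hN₂, hs2, hR]; field_simp; ring
  · rw [im_div_conj_self, hN₃, hs3, hR]; field_simp; ring
  · rw [im_div_conj_self, hN₄, hd, hR]; field_simp; ring

theorem pentagon_diagonal_AD_quadrilateral (m n p q u v s1 s2 s3 d R : ℚ)
    (hq : q ≠ 0) (hmn : m^2 + n^2 ≠ 0)
    (hs1 : s1 = (-(q * u * v) + p * u + p * v + q) *
      (p * u * v + q * u + q * v - p) / q^2)
    (hs2 : s2 = (u^2 + 1) * (q * v - p) * (p * v + q) / q^2)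
    (hs3 : s3 = m * n * (u^2 + 1) * (v^2 + 1) * (p^2 + q^2) /
      (q^2 * (m^2 + n^2)))
    (hd : d = (p^2 + q^2) * (v^2 + 1) * (m * u - n) * (n * u + m) /
      ((m^2 + n^2) * q^2))
    (hR : R = (u^2 + 1) * (v^2 + 1) * (p^2 + q^2) / (4 * q^2)) :
    (s1 * s2 + s3 * d) * (s1 * s3 + s2 * d) * (s1 * d + s2 * s3) =
      16 * R^2 * ((-s1 + s2 + s3 + d) * (s1 - s2 + s3 + d) *
        (s1 + s2 - s3 + d) * (s1 + s2 + s3 - d)) / 16 := by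
  have key := parameshvara_of_pentagon_parametrization (m := (m : ℝ)) (n := n) (p := p) (q := q)
    (u := u) (v := v) (s1 := s1) (s2 := s2) (s3 := s3) (d := d) (R := R)
    (by exact_mod_cast hq) (by exact_mod_cast hmn) (by exact_mod_cast hs1)
    (by exact_mod_cast hs2) (by exact_mod_cast hs3) (by exact_mod_cast hd) (by exact_mod_cast hR)
  apply Rat.cast_injective (α := ℝ)
  push_cast
  rw [key]
  ring
end

section
/- If u₁, u₂, m are rational numbers such that the denominator D = (u₁+u₂)m² + (−2u₁u₂+2)m − u₁ − u₂ is nonzero, and v₁ = ((u₁+u₂)u₂m² + (2u₁+2u₂)m − u₁u₂ + u₂² + 2)/D, v₂ = ((u₁+u₂)u₁m² + (2u₁+2u₂)m + u₁² − u₁u₂ + 2)/D, then (u₁²+1)(v₁²+1) = (u₂²+1)(v₂²+1). -/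
/-!
For fixed `u₁, u₂` the equation is a conic in `(v₁, v₂)` through the rational point
`(u₂, u₁)`. Writing `v₁ = u₂ + (u₂² + 1) s` and `v₂ = u₁ + (u₁² + 1) t`, the equation becomes
`2 u₂ s + (u₂² + 1) s² = 2 u₁ t + (u₁² + 1) t²`. The line through the origin in direction
`(u₁ m + 1, u₂ m + 1)` meets this conic again at `(s, t) = 2 (u₁ m + 1, u₂ m + 1) / D`, because
`(u₁² + 1)(u₂ m + 1)² - (u₂² + 1)(u₁ m + 1)² = (u₂ - u₁) D`.
-/

section CommRing

variable {R : Type*} [CommRing R]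

theorem sq_add_one_mul_sq_add_one_eq_of_conic {u₁ u₂ s t : R}
    (h : 2 * u₂ * s + (u₂ ^ 2 + 1) * s ^ 2 = 2 * u₁ * t + (u₁ ^ 2 + 1) * t ^ 2) :
    (u₁ ^ 2 + 1) * ((u₂ + (u₂ ^ 2 + 1) * s) ^ 2 + 1) =
      (u₂ ^ 2 + 1) * ((u₁ + (u₁ ^ 2 + 1) * t) ^ 2 + 1) := by
  linear_combination (u₁ ^ 2 + 1) * (u₂ ^ 2 + 1) * h

theorem sq_add_one_mul_sq_sub_sq_add_one_mul_sq (u₁ u₂ m : R) :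
    (u₁ ^ 2 + 1) * (u₂ * m + 1) ^ 2 - (u₂ ^ 2 + 1) * (u₁ * m + 1) ^ 2 =
      (u₂ - u₁) * ((u₁ + u₂) * m ^ 2 + (-(2 * u₁ * u₂) + 2) * m - u₁ - u₂) := by
  ring

end CommRing

section Field

variable {K : Type*} [Field K]

theorem second_intersection_mem_conic {u₁ u₂ m D : K}
    (hD : D = (u₁ + u₂) * m ^ 2 + (-(2 * u₁ * u₂) + 2) * m - u₁ - u₂) (hD0 : D ≠ 0) :
    2 * u₂ * (2 * (u₁ * m + 1) / D) + (u₂ ^ 2 + 1) * (2 * (u₁ * m + 1) / D) ^ 2 =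
      2 * u₁ * (2 * (u₂ * m + 1) / D) + (u₁ ^ 2 + 1) * (2 * (u₂ * m + 1) / D) ^ 2 := by
  field_simp
  linear_combination 4 * (u₂ - u₁) * hD - 4 * sq_add_one_mul_sq_sub_sq_add_one_mul_sq u₁ u₂ m

end Field

theorem hexagon_condition_solution (u1 u2 m D v1 v2 : ℚ)
    (hD : D = (u1 + u2) * m^2 + (-(2 * u1 * u2) + 2) * m - u1 - u2)
    (hD0 : D ≠ 0)
    (hv1 : v1 = ((u1 + u2) * u2 * m^2 + (2 * u1 + 2 * u2) * m
      - u1 * u2 + u2^2 + 2) / D)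
    (hv2 : v2 = ((u1 + u2) * u1 * m^2 + (2 * u1 + 2 * u2) * m
      + u1^2 - u1 * u2 + 2) / D) :
    (u1^2 + 1) * (v1^2 + 1) = (u2^2 + 1) * (v2^2 + 1) := by
  have hv1' : v1 = u2 + (u2 ^ 2 + 1) * (2 * (u1 * m + 1) / D) := by
    rw [hv1]
    field_simp
    linear_combination -u2 * hD
  have hv2' : v2 = u1 + (u1 ^ 2 + 1) * (2 * (u2 * m + 1) / D) := by
    rw [hv2]
    field_simp
    linear_combination -u1 * hD
  rw [hv1', hv2']
  exact sq_add_one_mul_sq_add_one_eq_of_conic (second_intersection_mem_conic hD hD0)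
end

section
/- Suppose rational numbers u₁,u₂,v₁,v₂,m satisfy the linear system u₁v₁ + u₂v₂ + 2 = −m(u₁+u₂−v₁−v₂) and m(u₁v₁−u₂v₂) = u₁−u₂−v₁+v₂. Then (u₁v₁+1)² − (u₂v₂+1)² = (u₂−v₂)² − (u₁−v₁)², and consequently (u₁²+1)(v₁²+1) = (u₂²+1)(v₂²+1). -/
/-!
Writing `(u² + 1)(v² + 1) = (uv + 1)² + (u - v)²`, the difference of the two products factors as
`A·C + B·D` with `A = u₁v₁ + u₂v₂ + 2`, `B = u₁ + u₂ - v₁ - v₂`, `C = u₁v₁ - u₂v₂`,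
`D = u₁ - u₂ - v₁ + v₂`; the system says `A = -m·B` and `m·C = D`, so `A·C + B·D = -m·B·C + B·m·C = 0`.
-/

section CommRing

variable {R : Type*} [CommRing R]

theorem sq_add_one_mul_sq_add_one (u v : R) :
    (u ^ 2 + 1) * (v ^ 2 + 1) = (u * v + 1) ^ 2 + (u - v) ^ 2 := by
  ring

theorem mul_add_mul_eq_zero_of_eq_neg_mul_of_mul_eq {a b c d m : R}
    (ha : a = -(m * b)) (hd : m * c = d) : a * c + b * d = 0 := by
  rw [ha, ← hd]
  ring

theorem hexagon_sq_sub_sq_factorization (u1 u2 v1 v2 : R) :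
    (u1 * v1 + 1) ^ 2 - (u2 * v2 + 1) ^ 2 - ((u2 - v2) ^ 2 - (u1 - v1) ^ 2) =
      (u1 * v1 + u2 * v2 + 2) * (u1 * v1 - u2 * v2) +
        (u1 + u2 - v1 - v2) * (u1 - u2 - v1 + v2) := by
  ring

end CommRing

theorem hexagon_linear_system (u1 u2 v1 v2 m : ℚ)
    (h1 : u1 * v1 + u2 * v2 + 2 = -(m * (u1 + u2 - v1 - v2)))
    (h2 : m * (u1 * v1 - u2 * v2) = u1 - u2 - v1 + v2) :
    (u1 * v1 + 1)^2 - (u2 * v2 + 1)^2 = (u2 - v2)^2 - (u1 - v1)^2 ∧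
    (u1^2 + 1) * (v1^2 + 1) = (u2^2 + 1) * (v2^2 + 1) := by
  have key : (u1 * v1 + 1)^2 - (u2 * v2 + 1)^2 = (u2 - v2)^2 - (u1 - v1)^2 := by
    rw [← sub_eq_zero, hexagon_sq_sub_sq_factorization]
    exact mul_add_mul_eq_zero_of_eq_neg_mul_of_mul_eq h1 h2
  refine ⟨key, ?_⟩
  rw [sq_add_one_mul_sq_add_one, sq_add_one_mul_sq_add_one]
  linear_combination key
end

section
/- There exists a convex cyclic hexagon in the Euclidean plane with circumradius 5525/2, consecutive sides 2044, 2880, 3315, 3124, 235, 4420, rational area 17227230, and all nine diagonals rational: the central diagonal AD = 5525 and the other eight diagonals have lengths 1751561/325, 5304, 4420, 5133, 26664/5, 3315, 4557, 26167/5. -/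
/-!
The vertices are rational points of the circle of radius `5525/2` about the origin, chosen so
that the sines and cosines of all half-angles between them are rational; every chord
`2R sin((θᵢ - θⱼ)/2)` is then rational, and each claimed length is an instance of Pythagoras.
Points of a circle are extreme points of any set inside its disc, since the disc is strictly
convex. For the area, the hexagon is fanned from `A` into the triangles `ABC, ACD, ADE, AEF`:
a point of the hexagon lies on the left of all six edges, and the diagonals `AC, AD, AE` decide
which triangle contains it. Consecutive triangles of the fan meet along a diagonal, a null set,
and a triangle has area half the absolute value of its wedge determinant.
-/

open Set MeasureTheory Metric Pointwise

local notation "ℝ²" => EuclideanSpace ℝ (Fin 2)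

theorem subset_extremePoints_convexHull_of_subset_sphere {E : Type*} [NormedAddCommGroup E]
    [NormedSpace ℝ E] [StrictConvexSpace ℝ E] {s : Set E} {c : E} {r : ℝ} (hr : r ≠ 0)
    (hs : s ⊆ sphere c r) : s ⊆ (convexHull ℝ s).extremePoints ℝ := fun _ hx =>
  inter_extremePoints_subset_extremePoints_of_subset
    (convexHull_min (hs.trans sphere_subset_closedBall) (convex_closedBall c r))
    ⟨subset_convexHull ℝ s hx, StrictConvexSpace.sphere_subset_extremePoints_closedBall c hr (hs hx)⟩

theorem dist_toLp_eq {a b c d q : ℝ} (hq : 0 ≤ q) (h : (a - c) ^ 2 + (b - d) ^ 2 = q ^ 2) :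
    dist !₂[a, b] !₂[c, d] = q := by
  rw [EuclideanSpace.dist_eq, Fin.sum_univ_two]
  simp [Real.dist_eq, sq_abs, h, Real.sqrt_sq hq]

def wedge : ℝ² →ₗ[ℝ] ℝ² →ₗ[ℝ] ℝ :=
  LinearMap.mk₂ ℝ (fun u v => u 0 * v 1 - u 1 * v 0)
    (fun _ _ _ => by simp only [PiLp.add_apply]; ring)
    (fun _ _ _ => by simp only [PiLp.smul_apply, smul_eq_mul]; ring)
    (fun _ _ _ => by simp only [PiLp.add_apply]; ring)
    (fun _ _ _ => by simp only [PiLp.smul_apply, smul_eq_mul]; ring)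

@[simp] theorem wedge_apply (u v : ℝ²) : wedge u v = u 0 * v 1 - u 1 * v 0 := rfl

theorem wedge_ne_zero {u : ℝ²} (hu : u ≠ 0) : wedge u ≠ 0 := fun h => hu <| by
  ext i
  fin_cases i
  · simpa using LinearMap.congr_fun h (EuclideanSpace.single 1 1)
  · simpa using LinearMap.congr_fun h (EuclideanSpace.single 0 1)

def leftOf (P Q : ℝ²) : Set ℝ² := {p | 0 ≤ wedge (Q - P) (p - P)}

theorem convex_leftOf (P Q : ℝ²) : Convex ℝ (leftOf P Q) := by
  have : leftOf P Q = {p | wedge (Q - P) P ≤ wedge (Q - P) p} := by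
    ext p
    simp only [leftOf, mem_ofPred_eq, map_sub, sub_nonneg]
  rw [this]
  exact convex_halfSpace_ge (wedge (Q - P)).isLinear _

theorem mem_leftOf_of_notMem {P Q p : ℝ²} (h : p ∉ leftOf P Q) : p ∈ leftOf Q P := by
  simp only [leftOf, mem_ofPred_eq, wedge_apply, PiLp.sub_apply, not_le] at h ⊢
  nlinarith

theorem volume_leftOf_inter_leftOf {P Q : ℝ²} (hPQ : P ≠ Q) :
    volume (leftOf P Q ∩ leftOf Q P) = 0 := by
  set K := LinearMap.ker (wedge (Q - P))
  have hline : leftOf P Q ∩ leftOf Q P ⊆ AffineSubspace.mk' P K := by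
    rintro p ⟨h₁, h₂⟩
    simp only [leftOf, mem_ofPred_eq, wedge_apply, PiLp.sub_apply] at h₁ h₂
    simp only [SetLike.mem_coe, AffineSubspace.mem_mk', K, LinearMap.mem_ker, vsub_eq_sub,
      wedge_apply, PiLp.sub_apply]
    linarith
  refine measure_mono_null hline (Measure.addHaar_affineSubspace _ _ fun htop => ?_)
  have hK : K = ⊤ := by simpa using congrArg AffineSubspace.direction htop
  exact wedge_ne_zero (sub_ne_zero.2 hPQ.symm) (LinearMap.ker_eq_top.1 hK)

theorem volume_union_of_subset_leftOf {P Q : ℝ²} (hPQ : P ≠ Q) {s t : Set ℝ²}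
    (hs : s ⊆ leftOf Q P) (ht : t ⊆ leftOf P Q) (htm : NullMeasurableSet t) :
    volume (s ∪ t) = volume s + volume t :=
  measure_union₀ htm <| measure_mono_null (s := s ∩ t)
    (fun _ hx => (⟨ht hx.2, hs hx.1⟩ : _ ∈ leftOf P Q ∩ leftOf Q P))
    (volume_leftOf_inter_leftOf hPQ)

theorem smul_add_smul_add_smul_mem_convexHull {𝕜 E : Type*} [Field 𝕜] [LinearOrder 𝕜]
    [IsStrictOrderedRing 𝕜] [AddCommGroup E] [Module 𝕜 E] {x y z : E} {a b c : 𝕜}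
    (ha : 0 ≤ a) (hb : 0 ≤ b) (hc : 0 ≤ c) (habc : a + b + c = 1) :
    a • x + b • y + c • z ∈ convexHull 𝕜 {x, y, z} := by
  have := (convex_convexHull 𝕜 ({x, y, z} : Set E)).sum_mem (t := Finset.univ) (w := ![a, b, c])
    (z := ![x, y, z]) (by intro i _; fin_cases i <;> simpa) (by simp [Fin.sum_univ_three, habc])
    (by intro i _; fin_cases i <;> exact subset_convexHull 𝕜 _ (by simp))
  simpa [Fin.sum_univ_three] using this

theorem mem_convexHull_triple_of_mem_leftOf {P Q R p : ℝ²} (hPQR : 0 < wedge (Q - P) (R - P))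
    (hPQ : p ∈ leftOf P Q) (hQR : p ∈ leftOf Q R) (hRP : p ∈ leftOf R P) :
    p ∈ convexHull ℝ {P, Q, R} := by
  set Δ := wedge (Q - P) (R - P)
  have hsum : wedge (R - Q) (p - Q) + wedge (P - R) (p - R) + wedge (Q - P) (p - P) = Δ := by
    simp only [Δ, wedge_apply, PiLp.sub_apply]
    ring
  have hcramer : wedge (R - Q) (p - Q) • P + wedge (P - R) (p - R) • Q +
      wedge (Q - P) (p - P) • R = Δ • p := by
    ext i
    fin_cases i <;>
      simp only [Fin.zero_eta, Fin.mk_one, Δ, wedge_apply, PiLp.sub_apply, PiLp.add_apply,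
        PiLp.smul_apply, smul_eq_mul] <;>
      ring
  rw [← inv_smul_smul₀ hPQR.ne' p, ← hcramer, smul_add, smul_add, smul_smul, smul_smul, smul_smul]
  refine smul_add_smul_add_smul_mem_convexHull ?_ ?_ ?_ ?_
  · exact mul_nonneg (inv_nonneg.2 hPQR.le) hQR
  · exact mul_nonneg (inv_nonneg.2 hPQR.le) hRP
  · exact mul_nonneg (inv_nonneg.2 hPQR.le) hPQ
  · rw [← mul_add, ← mul_add, hsum, inv_mul_cancel₀ hPQR.ne']

theorem convexHull_triple_eq_leftOf_inter {P Q R : ℝ²} (hPQR : 0 < wedge (Q - P) (R - P)) :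
    convexHull ℝ {P, Q, R} = leftOf P Q ∩ leftOf Q R ∩ leftOf R P := by
  refine Subset.antisymm (convexHull_min ?_ ?_)
    fun p ⟨⟨hPQ, hQR⟩, hRP⟩ => mem_convexHull_triple_of_mem_leftOf hPQR hPQ hQR hRP
  · simp only [wedge_apply, PiLp.sub_apply] at hPQR
    simp only [insert_subset_iff, singleton_subset_iff, mem_inter_iff, leftOf, mem_ofPred_eq,
      wedge_apply, PiLp.sub_apply]
    refine ⟨⟨⟨?_, ?_⟩, ?_⟩, ⟨⟨?_, ?_⟩, ?_⟩, ⟨⟨?_, ?_⟩, ?_⟩⟩ <;> nlinarith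
  · exact ((convex_leftOf _ _).inter (convex_leftOf _ _)).inter (convex_leftOf _ _)

theorem mem_fan_of_mem_leftOf {A B C D E F p : ℝ²} (hABC : 0 < wedge (B - A) (C - A))
    (hACD : 0 < wedge (C - A) (D - A)) (hADE : 0 < wedge (D - A) (E - A))
    (hAEF : 0 < wedge (E - A) (F - A)) (hAB : p ∈ leftOf A B) (hBC : p ∈ leftOf B C)
    (hCD : p ∈ leftOf C D) (hDE : p ∈ leftOf D E) (hEF : p ∈ leftOf E F) (hFA : p ∈ leftOf F A) :
    p ∈ convexHull ℝ {A, B, C} ∪ (convexHull ℝ {A, C, D} ∪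
      (convexHull ℝ {A, D, E} ∪ convexHull ℝ {A, E, F})) := by
  by_cases hAC : p ∈ leftOf A C
  swap
  · exact .inl (mem_convexHull_triple_of_mem_leftOf hABC hAB hBC (mem_leftOf_of_notMem hAC))
  by_cases hAD : p ∈ leftOf A D
  swap
  · exact .inr <| .inl <|
      mem_convexHull_triple_of_mem_leftOf hACD hAC hCD (mem_leftOf_of_notMem hAD)
  by_cases hAE : p ∈ leftOf A E
  swap
  · exact .inr <| .inr <| .inl <|
      mem_convexHull_triple_of_mem_leftOf hADE hAD hDE (mem_leftOf_of_notMem hAE)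
  exact .inr <| .inr <| .inr <| mem_convexHull_triple_of_mem_leftOf hAEF hAE hEF hFA

theorem volume_stdTriangle_prod :
    volume {q : ℝ × ℝ | 0 ≤ q.1 ∧ 0 ≤ q.2 ∧ q.1 + q.2 ≤ 1} = ENNReal.ofReal (1 / 2) := by
  set T := {q : ℝ × ℝ | 0 ≤ q.1 ∧ 0 ≤ q.2 ∧ q.1 + q.2 ≤ 1}
  have hT : MeasurableSet T := by measurability
  have hslice (x : ℝ) : volume (Prod.mk x ⁻¹' T) =
      (Icc 0 1).indicator (fun x => ENNReal.ofReal (1 - x)) x := by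
    by_cases hx : x ∈ Icc (0 : ℝ) 1
    · have : Prod.mk x ⁻¹' T = Icc 0 (1 - x) := by
        ext y
        simp only [T, mem_preimage, mem_ofPred_eq, mem_Icc]
        constructor
        · rintro ⟨-, h₂, h₃⟩
          exact ⟨h₂, by linarith⟩
        · rintro ⟨h₂, h₃⟩
          exact ⟨hx.1, h₂, by linarith⟩
      rw [indicator_of_mem hx, this, Real.volume_Icc, sub_zero]
    · have : Prod.mk x ⁻¹' T = ∅ := by
        ext y
        simp only [T, mem_preimage, mem_ofPred_eq, mem_empty_iff_false, iff_false]
        rintro ⟨h₁, h₂, h₃⟩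
        exact hx ⟨h₁, by linarith⟩
      rw [indicator_of_notMem hx, this, measure_empty]
  rw [Measure.volume_eq_prod, Measure.prod_apply hT, lintegral_congr hslice,
    lintegral_indicator measurableSet_Icc, ← ofReal_integral_eq_lintegral_ofReal,
    integral_Icc_eq_integral_Ioc, ← intervalIntegral.integral_of_le zero_le_one]
  · rw [intervalIntegral.integral_sub intervalIntegrable_const
      intervalIntegral.intervalIntegrable_id]
    norm_num
  · exact (continuous_const.sub continuous_id).integrableOn_Icc
  · exact (ae_restrict_iff' measurableSet_Icc).2 (ae_of_all _ fun x hx => sub_nonneg.2 hx.2)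

theorem volume_convexHull_zero_single_single :
    volume (convexHull ℝ {0, EuclideanSpace.single 0 1, EuclideanSpace.single 1 1} : Set ℝ²) =
      ENNReal.ofReal (1 / 2) := by
  let e : ℝ² ≃ᵐ ℝ × ℝ :=
    (MeasurableEquiv.toLp 2 (Fin 2 → ℝ)).symm.trans MeasurableEquiv.finTwoArrow
  have he : MeasurePreserving e := (EuclideanSpace.volume_preserving_symm_measurableEquiv_toLp
    (Fin 2)).trans (volume_preserving_finTwoArrow ℝ)
  have hhull : convexHull ℝ {0, EuclideanSpace.single 0 1, EuclideanSpace.single 1 1} =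
      e ⁻¹' {q : ℝ × ℝ | 0 ≤ q.1 ∧ 0 ≤ q.2 ∧ q.1 + q.2 ≤ 1} := by
    rw [convexHull_triple_eq_leftOf_inter (by simp)]
    ext p
    simp [leftOf, e, MeasurableEquiv.finTwoArrow, le_sub_iff_add_le', and_comm]
  rw [hhull, he.measure_preimage (by measurability), volume_stdTriangle_prod]

theorem det_constr_basisFun (u v : ℝ²) :
    LinearMap.det ((EuclideanSpace.basisFun (Fin 2) ℝ).toBasis.constr ℝ ![u, v]) = wedge u v := by
  rw [← LinearMap.det_toMatrix (EuclideanSpace.basisFun (Fin 2) ℝ).toBasis, Matrix.det_fin_two]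
  simp [LinearMap.toMatrix_apply, mul_comm]

theorem volume_convexHull_triple (P Q R : ℝ²) :
    volume (convexHull ℝ {P, Q, R}) = ENNReal.ofReal (|wedge (Q - P) (R - P)| / 2) := by
  set b := (EuclideanSpace.basisFun (Fin 2) ℝ).toBasis
  set f := b.constr ℝ ![Q - P, R - P]
  have himage : ({P, Q, R} : Set ℝ²) =
      P +ᵥ f '' {0, EuclideanSpace.single 0 1, EuclideanSpace.single 1 1} := by
    have hf (i : Fin 2) : f (EuclideanSpace.single i 1) = ![Q - P, R - P] i := by
      rw [← EuclideanSpace.basisFun_apply, ← OrthonormalBasis.coe_toBasis]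
      exact b.constr_basis ℝ _ i
    simp [image_insert_eq, hf, vadd_set_insert]
  rw [himage, convexHull_vadd, measure_vadd, ← f.image_convexHull,
    Measure.addHaar_image_linearMap, volume_convexHull_zero_single_single, det_constr_basisFun,
    ← ENNReal.ofReal_mul (abs_nonneg _)]
  ring_nf

namespace Hexagon

/- The hexagon of the parametrization `(m, t, u₁, u₂) = (5, 1, 2, -3)`, listed counterclockwise. -/
noncomputable def A : ℝ² := !₂[5525/2, 0]
noncomputable def B : ℝ² := !₂[22169753/11050, 10491852/5525]
noncomputable def C : ℝ² := !₂[-1547/2, 2652]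
noncomputable def D : ℝ² := !₂[-5525/2, 0]
noncomputable def E : ℝ² := !₂[-11006873/11050, -14236068/5525]
noncomputable def F : ℝ² := !₂[-1547/2, -2652]

theorem subset_sphere : {A, B, C, D, E, F} ⊆ sphere !₂[0, 0] (5525/2) := by
  simp only [insert_subset_iff, singleton_subset_iff, mem_sphere']
  refine ⟨?_, ?_, ?_, ?_, ?_, ?_⟩ <;> exact dist_toLp_eq (by norm_num) (by norm_num)

theorem sides : dist A B = 2044 ∧ dist B C = 2880 ∧ dist C D = 3315 ∧ dist D E = 3124 ∧
    dist E F = 235 ∧ dist F A = 4420 ∧ dist A D = 5525 := by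
  refine ⟨?_, ?_, ?_, ?_, ?_, ?_, ?_⟩ <;> exact dist_toLp_eq (by norm_num) (by norm_num)

theorem diagonals : dist B E = 1751561/325 ∧ dist C F = 5304 ∧ dist A C = 4420 ∧
    dist B D = 5133 ∧ dist C E = 26167/5 ∧ dist D F = 3315 ∧ dist B F = 26664/5 ∧
    dist A E = 4557 := by
  refine ⟨?_, ?_, ?_, ?_, ?_, ?_, ?_, ?_⟩ <;> exact dist_toLp_eq (by norm_num) (by norm_num)

theorem convexHull_eq_fan : convexHull ℝ {A, B, C, D, E, F} = convexHull ℝ {A, B, C} ∪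
    (convexHull ℝ {A, C, D} ∪ (convexHull ℝ {A, D, E} ∪ convexHull ℝ {A, E, F})) := by
  refine Subset.antisymm (fun p hp => ?_) ?_
  · have hedges : convexHull ℝ {A, B, C, D, E, F} ⊆ leftOf A B ∩ leftOf B C ∩ leftOf C D ∩
        leftOf D E ∩ leftOf E F ∩ leftOf F A := by
      refine convexHull_min ?_ ?_
      · norm_num [insert_subset_iff, leftOf, A, B, C, D, E, F]
      · exact ((((((convex_leftOf _ _).inter (convex_leftOf _ _)).inter (convex_leftOf _ _)).inter
          (convex_leftOf _ _)).inter (convex_leftOf _ _)).inter (convex_leftOf _ _))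
    obtain ⟨⟨⟨⟨⟨hAB, hBC⟩, hCD⟩, hDE⟩, hEF⟩, hFA⟩ := hedges hp
    exact mem_fan_of_mem_leftOf (by norm_num [A, B, C]) (by norm_num [A, C, D])
      (by norm_num [A, D, E]) (by norm_num [A, E, F]) hAB hBC hCD hDE hEF hFA
  · refine union_subset (convexHull_mono ?_) (union_subset (convexHull_mono ?_)
      (union_subset (convexHull_mono ?_) (convexHull_mono ?_))) <;>
      simp [insert_subset_iff]

theorem volume_convexHull : volume (convexHull ℝ {A, B, C, D, E, F}) = 17227230 := by
  have hAC : A ≠ C := fun h => by norm_num [A, C] at h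
  have hAD : A ≠ D := fun h => by norm_num [A, D] at h
  have hAE : A ≠ E := fun h => by norm_num [A, E] at h
  have hsub {P Q : ℝ²} {s : Set ℝ²} (h : s ⊆ leftOf P Q) : convexHull ℝ s ⊆ leftOf P Q :=
    convexHull_min h (convex_leftOf P Q)
  have hm (P Q R : ℝ²) : NullMeasurableSet (convexHull ℝ {P, Q, R}) :=
    ((toFinite _).isCompact_convexHull (𝕜 := ℝ)).isClosed.measurableSet.nullMeasurableSet
  rw [convexHull_eq_fan,
    volume_union_of_subset_leftOf hAC (hsub ?_) (union_subset (hsub ?_) (union_subset (hsub ?_)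
      (hsub ?_))) ((hm _ _ _).union ((hm _ _ _).union (hm _ _ _))),
    volume_union_of_subset_leftOf hAD (hsub ?_) (union_subset (hsub ?_) (hsub ?_))
      ((hm _ _ _).union (hm _ _ _)),
    volume_union_of_subset_leftOf hAE (hsub ?_) (hsub ?_) (hm _ _ _)]
  · simp only [volume_convexHull_triple]
    norm_num [A, B, C, D, E, F]
  all_goals norm_num [insert_subset_iff, leftOf, A, B, C, D, E, F]

end Hexagon

theorem brahmagupta_hexagon_example :
    ∃ (O A B C D E F : EuclideanSpace ℝ (Fin 2)),
      ({A, B, C, D, E, F} : Set (EuclideanSpace ℝ (Fin 2))) ⊆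
        Set.extremePoints ℝ
          (convexHull ℝ ({A, B, C, D, E, F} : Set (EuclideanSpace ℝ (Fin 2)))) ∧
      dist O A = 5525/2 ∧ dist O B = 5525/2 ∧ dist O C = 5525/2 ∧
      dist O D = 5525/2 ∧ dist O E = 5525/2 ∧ dist O F = 5525/2 ∧
      dist A B = 2044 ∧ dist B C = 2880 ∧ dist C D = 3315 ∧
      dist D E = 3124 ∧ dist E F = 235 ∧ dist F A = 4420 ∧
      dist A D = 5525 ∧
      ({dist B E, dist C F, dist A C, dist B D, dist C E,
        dist D F, dist B F, dist A E} : Multiset ℝ) =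
        ({1751561/325, 5304, 4420, 5133, 26664/5, 3315, 4557, 26167/5} :
          Multiset ℝ) ∧
      MeasureTheory.volume
        (convexHull ℝ ({A, B, C, D, E, F} : Set (EuclideanSpace ℝ (Fin 2)))) =
        17227230 := by
  obtain ⟨hAB, hBC, hCD, hDE, hEF, hFA, hAD⟩ := Hexagon.sides
  obtain ⟨hBE, hCF, hAC, hBD, hCE, hDF, hBF, hAE⟩ := Hexagon.diagonals
  refine ⟨!₂[0, 0], Hexagon.A, Hexagon.B, Hexagon.C, Hexagon.D, Hexagon.E, Hexagon.F,
    subset_extremePoints_convexHull_of_subset_sphere (by norm_num) Hexagon.subset_sphere,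
    ?_, ?_, ?_, ?_, ?_, ?_, hAB, hBC, hCD, hDE, hEF, hFA, hAD, ?_, Hexagon.volume_convexHull⟩
  iterate 6 exact mem_sphere'.1 (Hexagon.subset_sphere (by simp))
  rw [hBE, hCF, hAC, hBD, hCE, hDF, hBF, hAE]
  simp only [Multiset.insert_eq_cons, ← Multiset.cons_zero, Multiset.cons_swap]
end

section
/- Let a₁,a₂,a₃,a₄ be the Sastry sides with parameters (t,u₁,v₁) and b₁,b₂,b₃,b₄ the Sastry sides with parameters (t,u₂,v₂), where v₁,v₂ are given by the rational functions v₁ = ((u₁+u₂)u₂m²+(2u₁+2u₂)m−u₁u₂+u₂²+2)/D, v₂ = ((u₁+u₂)u₁m²+(2u₁+2u₂)m+u₁²−u₁u₂+2)/D with D = (u₁+u₂)m²+(−2u₁u₂+2)m−u₁−u₂ ≠ 0. Then a₃ = t(1+u₁²)(1+v₁²) equals b₃ = t(1+u₂²)(1+v₂²), and the circumradii (1+t²)(1+u₁²)(1+v₁²)/4 and (1+t²)(1+u₂²)(1+v₂²)/4 are equal. -/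
/-!
Since `(1 + u²)(1 + v²) = |(1 + i u)(1 + i v)|²`, write `v₁ = N₁ / D` and look at `D + i N₁`.
It vanishes at `u₂ = i`, so it is divisible by `1 + i u₂`, with quotient
`w₁ = ((u₁ + u₂) m² + 2 m + u₂ - u₁) + 2 i (u₁ m + 1)`. Hence
`(1 + u₁²)(1 + v₁²) D² = (1 + u₁²)(1 + u₂²) |w₁|²`. Exchanging `u₁` and `u₂` fixes `D`, turns `v₁`
into `v₂` and `w₁` into a `w₂` with `|w₂|² = |w₁|²`, so the two products agree; the common side and
the circumradius are `t` and `(1 + t²) / 4` times this product.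
-/

namespace SastryHexagon

variable {K : Type*}

def denom [CommRing K] (u₁ u₂ m : K) : K :=
  (u₁ + u₂) * m ^ 2 + (-(2 * u₁ * u₂) + 2) * m - u₁ - u₂

def numer [CommRing K] (u₁ u₂ m : K) : K :=
  (u₁ + u₂) * u₂ * m ^ 2 + (2 * u₁ + 2 * u₂) * m - u₁ * u₂ + u₂ ^ 2 + 2

/-- `|w₁|²` for the quotient `w₁ = (D + i N₁) / (1 + i u₂)`. -/
def quotNormSq [CommRing K] (u₁ u₂ m : K) : K :=
  ((u₁ + u₂) * m ^ 2 + 2 * m + u₂ - u₁) ^ 2 + 4 * (u₁ * m + 1) ^ 2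

theorem denom_comm [CommRing K] (u₁ u₂ m : K) : denom u₁ u₂ m = denom u₂ u₁ m := by
  unfold denom; ring

theorem quotNormSq_comm [CommRing K] (u₁ u₂ m : K) :
    quotNormSq u₁ u₂ m = quotNormSq u₂ u₁ m := by
  unfold quotNormSq; ring

theorem denom_sq_add_numer_sq [CommRing K] (u₁ u₂ m : K) :
    denom u₁ u₂ m ^ 2 + numer u₁ u₂ m ^ 2 = (1 + u₂ ^ 2) * quotNormSq u₁ u₂ m := by
  unfold denom numer quotNormSq; ring

theorem one_add_div_sq [Field K] (a b : K) (hb : b ≠ 0) : 1 + (a / b) ^ 2 = (b ^ 2 + a ^ 2) / b ^ 2 := by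
  field_simp

theorem one_add_sq_mul_one_add_div_sq [Field K] (u₁ u₂ m : K) (hD : denom u₁ u₂ m ≠ 0) :
    (1 + u₁ ^ 2) * (1 + (numer u₁ u₂ m / denom u₁ u₂ m) ^ 2) =
      (1 + u₁ ^ 2) * (1 + u₂ ^ 2) * quotNormSq u₁ u₂ m / denom u₁ u₂ m ^ 2 := by
  rw [one_add_div_sq _ _ hD, denom_sq_add_numer_sq, mul_div_assoc', mul_assoc]

theorem one_add_sq_mul_one_add_div_sq_comm [Field K] (u₁ u₂ m : K) (hD : denom u₁ u₂ m ≠ 0) :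
    (1 + u₁ ^ 2) * (1 + (numer u₁ u₂ m / denom u₁ u₂ m) ^ 2) =
      (1 + u₂ ^ 2) * (1 + (numer u₂ u₁ m / denom u₂ u₁ m) ^ 2) := by
  rw [one_add_sq_mul_one_add_div_sq _ _ _ hD,
    one_add_sq_mul_one_add_div_sq _ _ _ (denom_comm u₁ u₂ m ▸ hD),
    denom_comm u₂, quotNormSq_comm u₂, mul_comm (1 + u₂ ^ 2)]

end SastryHexagon

open SastryHexagon in
theorem hexagon_common_side_and_circumradius (t u1 u2 m D v1 v2 : ℚ)
    (hD : D = (u1 + u2) * m^2 + (-(2 * u1 * u2) + 2) * m - u1 - u2)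
    (hD0 : D ≠ 0)
    (hv1 : v1 = ((u1 + u2) * u2 * m^2 + (2 * u1 + 2 * u2) * m
      - u1 * u2 + u2^2 + 2) / D)
    (hv2 : v2 = ((u1 + u2) * u1 * m^2 + (2 * u1 + 2 * u2) * m
      + u1^2 - u1 * u2 + 2) / D) :
    t * (1 + u1^2) * (1 + v1^2) = t * (1 + u2^2) * (1 + v2^2) ∧
    (1 + t^2) * (1 + u1^2) * (1 + v1^2) / 4 =
      (1 + t^2) * (1 + u2^2) * (1 + v2^2) / 4 := by
  have hD₁ : D = denom u1 u2 m := hD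
  have hD₂ : D = denom u2 u1 m := hD₁.trans (denom_comm u1 u2 m)
  have hv₁ : v1 = numer u1 u2 m / denom u1 u2 m := by rw [hv1, hD₁]; rfl
  have hv₂ : v2 = numer u2 u1 m / denom u2 u1 m := by
    rw [hv2, hD₂, numer]; ring
  have key : (1 + u1 ^ 2) * (1 + v1 ^ 2) = (1 + u2 ^ 2) * (1 + v2 ^ 2) := by
    rw [hv₁, hv₂]
    exact one_add_sq_mul_one_add_div_sq_comm u1 u2 m (hD₁ ▸ hD0)
  constructor <;> rw [mul_assoc, mul_assoc, key]
end

section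
/- For the pentagon sides s₁,…,s₅ defined by s₁ = (−quv+pu+pv+q)(puv+qu+qv−p)/q², s₂ = (u²+1)(qv−p)(pv+q)/q², s₃ = mn(u²+1)(v²+1)(p²+q²)/(q²(m²+n²)), s₄ = (u²+1)(v²+1)(mq+np)(mp−nq)/(q²(m²+n²)), s₅ = (v²+1)(qu−p)(pu+q)/q², and the diagonal e = p(u²+1)(v²+1)/q (length of CE), the triangle with sides s₃, s₄, e has circumradius R = (u²+1)(v²+1)(p²+q²)/(4q²): (s₃·s₄·e)² = R²(s₃+s₄+e)(s₃+s₄−e)(s₄+e−s₃)(e+s₃−s₄). -/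
/-!
The triangle is inscribed in a circle of radius `R` and its sides obey the law of sines:
`e = 2R sin θ`, `s₃ = 2R sin φ` and `s₄ = 2R sin (θ + φ)`, where `(cos θ, sin θ)` and
`(cos φ, sin φ)` are the rational points of the unit circle with half-angle tangents `q / p`
and `n / m`.
Conversely, any three chords `2R sin A`, `2R sin B`, `2R sin (A + B)` form a triangle of
circumradius `R`, which is a polynomial identity modulo `sin² + cos² = 1`.
-/

def HasCircumradius {K : Type*} [CommRing K] (a b c R : K) : Prop :=
  (a * b * c) ^ 2 = R ^ 2 * ((a + b + c) * (a + b - c) * (b + c - a) * (c + a - b))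

theorem hasCircumradius_of_sin_add {K : Type*} [CommRing K] (R sA cA sB cB : K)
    (hA : sA ^ 2 + cA ^ 2 = 1) (hB : sB ^ 2 + cB ^ 2 = 1) :
    HasCircumradius (2 * R * sA) (2 * R * (sA * cB + cA * sB)) (2 * R * sB) R := by
  set sAB := sA * cB + cA * sB
  set cAB := cA * cB - sA * sB
  have sin_add_sq_sub_sin_sq_sub_sin_sq : sAB ^ 2 - sA ^ 2 - sB ^ 2 = 2 * sA * sB * cAB := by
    linear_combination sA ^ 2 * hB + sB ^ 2 * hA
  have sin_sq_add_cos_sq_add : sAB ^ 2 + cAB ^ 2 = 1 := by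
    linear_combination (sB ^ 2 + cB ^ 2) * hA + hB
  unfold HasCircumradius
  linear_combination
    16 * R ^ 6 * (sAB ^ 2 - sA ^ 2 - sB ^ 2 + 2 * sA * sB * cAB) *
        sin_add_sq_sub_sin_sq_sub_sin_sq +
      64 * R ^ 6 * sA ^ 2 * sB ^ 2 * sin_sq_add_cos_sq_add

theorem circleParam_sq_add_sq {K : Type*} [Field K] {p q : K} (h : p ^ 2 + q ^ 2 ≠ 0) :
    (2 * p * q / (p ^ 2 + q ^ 2)) ^ 2 + ((p ^ 2 - q ^ 2) / (p ^ 2 + q ^ 2)) ^ 2 = 1 := by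
  field_simp
  ring

theorem pentagon_triangle_CDE_circumradius_general (m n p q u v s3 s4 e R : ℚ)
    (hq : q ≠ 0) (hmn : m^2 + n^2 ≠ 0)
    (hs3 : s3 = m * n * (u^2 + 1) * (v^2 + 1) * (p^2 + q^2) /
      (q^2 * (m^2 + n^2)))
    (hs4 : s4 = (u^2 + 1) * (v^2 + 1) * (m * q + n * p) * (m * p - n * q) /
      (q^2 * (m^2 + n^2)))
    (he : e = p * (u^2 + 1) * (v^2 + 1) / q)
    (hR : R = (u^2 + 1) * (v^2 + 1) * (p^2 + q^2) / (4 * q^2)) :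
    (s3 * s4 * e)^2 =
      R^2 * ((s3 + s4 + e) * (s3 + s4 - e) * (s4 + e - s3) * (e + s3 - s4)) := by
  have hpq : p ^ 2 + q ^ 2 ≠ 0 := by positivity
  have law_of_sines := hasCircumradius_of_sin_add R _ _ _ _
    (circleParam_sq_add_sq hmn) (circleParam_sq_add_sq hpq)
  have hs3' : s3 = 2 * R * (2 * m * n / (m ^ 2 + n ^ 2)) := by
    rw [hs3, hR]; field_simp; ring
  have hs4' : s4 = 2 * R * (2 * m * n / (m ^ 2 + n ^ 2) * ((p ^ 2 - q ^ 2) / (p ^ 2 + q ^ 2)) +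
      (m ^ 2 - n ^ 2) / (m ^ 2 + n ^ 2) * (2 * p * q / (p ^ 2 + q ^ 2))) := by
    rw [hs4, hR]; field_simp; ring
  have he' : e = 2 * R * (2 * p * q / (p ^ 2 + q ^ 2)) := by
    rw [he, hR]; field_simp; ring
  rw [hs3', hs4', he']
  exact law_of_sines

theorem pentagon_triangle_CDE_circumradius (m n p q u v s3 s4 e R : ℚ)
    (hq : q ≠ 0) (hmn : m^2 + n^2 ≠ 0) (hmnpq : m * n * p * q ≠ 0)
    (hs3 : s3 = m * n * (u^2 + 1) * (v^2 + 1) * (p^2 + q^2) /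
      (q^2 * (m^2 + n^2)))
    (hs4 : s4 = (u^2 + 1) * (v^2 + 1) * (m * q + n * p) * (m * p - n * q) /
      (q^2 * (m^2 + n^2)))
    (he : e = p * (u^2 + 1) * (v^2 + 1) / q)
    (hR : R = (u^2 + 1) * (v^2 + 1) * (p^2 + q^2) / (4 * q^2)) :
    (s3 * s4 * e)^2 =
      R^2 * ((s3 + s4 + e) * (s3 + s4 - e) * (s4 + e - s3) * (e + s3 - s4)) :=
  pentagon_triangle_CDE_circumradius_general m n p q u v s3 s4 e R hq hmn hs3 hs4 he hR
end

section
/- There exist five points A,B,C,D,E in cyclic order on a circle of radius 65/18 in the Euclidean plane with |AB| = 11/3, |BC| = 56/9, |CD| = 13/3, |DE| = 11/3, |EA| = 25/9, such that all five diagonals are rational: |CE| = 20/3 and the remaining diagonals have lengths 65/9, 52/9, 323/45, 52/9, and the pentagon has area 28. -/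
/-!
Place the circumcentre at the origin and the diameter `AC` on the x-axis: then all five vertices
have rational coordinates, so each length is the square root of an exact rational sum of squares.
The diagonals `AC` and `AD` cut the pentagon into the triangles `ABC`, `ACD`, `ADE`, of areas
`308/27`, `338/27` and `110/27`; the area of a triangle is half its absolute determinant, by Fubini
on the unit triangle and the change of variables formula for linear maps.
-/

open MeasureTheory Set Pointwise

namespace RationalPentagon

theorem smul_add_smul_add_smul_mem_convexHull {E : Type*} [AddCommGroup E] [Module ℝ E]
    (a b c : E) {α β γ : ℝ} (hα : 0 ≤ α) (hβ : 0 ≤ β) (hγ : 0 ≤ γ) (h : α + β + γ = 1) :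
    α • a + β • b + γ • c ∈ convexHull ℝ {a, b, c} := by
  have := (convex_convexHull ℝ ({a, b, c} : Set E)).sum_mem (t := Finset.univ)
    (w := ![α, β, γ]) (z := ![a, b, c]) (by simp [Fin.forall_fin_succ, hα, hβ, hγ])
    (by simp [Fin.sum_univ_three, h]) (fun i _ ↦ subset_convexHull ℝ _ (by fin_cases i <;> simp))
  simpa [Fin.sum_univ_three] using this

def halfPlane (u v w : ℝ) : Set (ℝ × ℝ) := {p | u * p.1 + v * p.2 ≤ w}

theorem convex_halfPlane (u v w : ℝ) : Convex ℝ (halfPlane u v w) :=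
  convex_halfSpace_le (u • LinearMap.fst ℝ ℝ ℝ + v • LinearMap.snd ℝ ℝ ℝ).isLinear w

theorem convexHull_subset_halfPlane {s : Set (ℝ × ℝ)} {u v w : ℝ}
    (h : ∀ p ∈ s, u * p.1 + v * p.2 ≤ w) : convexHull ℝ s ⊆ halfPlane u v w :=
  convexHull_min h (convex_halfPlane u v w)

theorem addHaar_hyperplane {E : Type*} [NormedAddCommGroup E] [NormedSpace ℝ E]
    [MeasurableSpace E] [BorelSpace E] [FiniteDimensional ℝ E] (μ : Measure E)
    [μ.IsAddHaarMeasure] {f : E →ₗ[ℝ] ℝ} (hf : f ≠ 0) (w : ℝ) : μ {x | f x = w} = 0 := by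
  rcases eq_empty_or_nonempty {x | f x = w} with h | ⟨x₀, hx₀ : f x₀ = w⟩
  · rw [h, measure_empty]
  have hline : {x | f x = w} = (AffineSubspace.mk' x₀ (LinearMap.ker f) : Set E) := by
    ext x
    simp only [mem_ofPred_eq, SetLike.mem_coe, AffineSubspace.mem_mk', vsub_eq_sub,
      LinearMap.mem_ker, map_sub, hx₀, sub_eq_zero]
  rw [hline]
  refine Measure.addHaar_affineSubspace μ _ fun htop ↦ hf ?_
  have := congrArg AffineSubspace.direction htop
  rwa [AffineSubspace.direction_mk', AffineSubspace.direction_top, LinearMap.ker_eq_top] at this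

theorem volume_union_of_subset_halfPlane {s t : Set (ℝ × ℝ)} {u v w : ℝ} (huv : (u, v) ≠ 0)
    (hs : s ⊆ halfPlane u v w) (ht : t ⊆ halfPlane (-u) (-v) (-w))
    (ht_meas : NullMeasurableSet t) : volume (s ∪ t) = volume s + volume t := by
  set f : ℝ × ℝ →ₗ[ℝ] ℝ := u • LinearMap.fst ℝ ℝ ℝ + v • LinearMap.snd ℝ ℝ ℝ
  have hf : f ≠ 0 := fun h ↦ huv <| by
    have hu : u = 0 := by simpa [f] using LinearMap.congr_fun h (1, 0)
    have hv : v = 0 := by simpa [f] using LinearMap.congr_fun h (0, 1)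
    rw [hu, hv, Prod.mk_zero_zero]
  refine measure_union₀ ht_meas <| measure_mono_null (fun p ⟨hps, hpt⟩ ↦ ?_)
    (addHaar_hyperplane volume hf w)
  have h₁ := hs hps
  have h₂ := ht hpt
  simp only [halfPlane, mem_ofPred_eq] at h₁ h₂ ⊢
  simp only [f, LinearMap.add_apply, LinearMap.smul_apply, LinearMap.fst_apply,
    LinearMap.snd_apply, smul_eq_mul]
  linarith

theorem convexHull_unitTriangle :
    convexHull ℝ {((0 : ℝ), (0 : ℝ)), (1, 0), (0, 1)} =
      {p : ℝ × ℝ | 0 ≤ p.1 ∧ 0 ≤ p.2 ∧ p.1 + p.2 ≤ 1} := by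
  have hS : {p : ℝ × ℝ | 0 ≤ p.1 ∧ 0 ≤ p.2 ∧ p.1 + p.2 ≤ 1} =
      halfPlane (-1) 0 0 ∩ halfPlane 0 (-1) 0 ∩ halfPlane 1 1 1 := by
    ext p
    simp only [halfPlane, mem_inter_iff, mem_ofPred_eq]
    exact ⟨fun ⟨h₁, h₂, h₃⟩ ↦ ⟨⟨by linarith, by linarith⟩, by linarith⟩,
      fun ⟨⟨h₁, h₂⟩, h₃⟩ ↦ ⟨by linarith, by linarith, by linarith⟩⟩
  refine Subset.antisymm (convexHull_min ?_ ?_) fun p ⟨h₁, h₂, h₃⟩ ↦ ?_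
  · rintro p (rfl | rfl | rfl) <;> norm_num
  · rw [hS]
    exact ((convex_halfPlane _ _ _).inter (convex_halfPlane _ _ _)).inter (convex_halfPlane _ _ _)
  · convert smul_add_smul_add_smul_mem_convexHull ((0 : ℝ), (0 : ℝ)) (1, 0) (0, 1)
      (α := 1 - p.1 - p.2) (by linarith) h₁ h₂ (by ring) using 1
    ext <;> simp

theorem volume_convexHull_unitTriangle :
    volume (convexHull ℝ {((0 : ℝ), (0 : ℝ)), (1, 0), (0, 1)}) = ENNReal.ofReal (1 / 2) := by
  have hmeas := ((toFinite {((0 : ℝ), (0 : ℝ)), (1, 0), (0, 1)}).isCompact_convexHull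
    (𝕜 := ℝ)).measurableSet
  rw [convexHull_unitTriangle] at hmeas ⊢
  have hslice (x : ℝ) :
      volume (Prod.mk x ⁻¹' {p : ℝ × ℝ | 0 ≤ p.1 ∧ 0 ≤ p.2 ∧ p.1 + p.2 ≤ 1}) =
        (Icc 0 1).indicator (fun x ↦ ENNReal.ofReal (1 - x)) x := by
    by_cases hx : x ∈ Icc (0 : ℝ) 1
    · have hslice_eq :
          Prod.mk x ⁻¹' {p : ℝ × ℝ | 0 ≤ p.1 ∧ 0 ≤ p.2 ∧ p.1 + p.2 ≤ 1} = Icc 0 (1 - x) := by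
        ext y
        simp only [mem_preimage, mem_ofPred_eq, mem_Icc]
        exact ⟨fun ⟨_, h₂, h₃⟩ ↦ ⟨h₂, by linarith⟩, fun ⟨h₂, h₃⟩ ↦ ⟨hx.1, h₂, by linarith⟩⟩
      simp [hslice_eq, hx]
    · have hslice_eq : Prod.mk x ⁻¹' {p : ℝ × ℝ | 0 ≤ p.1 ∧ 0 ≤ p.2 ∧ p.1 + p.2 ≤ 1} = ∅ := by
        ext y
        simp only [mem_preimage, mem_ofPred_eq, mem_empty_iff_false, iff_false]
        rintro ⟨h₁, h₂, h₃⟩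
        exact hx ⟨h₁, by linarith⟩
      simp [hslice_eq, hx]
  rw [Measure.volume_eq_prod, Measure.prod_apply hmeas]
  simp only [hslice, lintegral_indicator measurableSet_Icc]
  rw [← ofReal_integral_eq_lintegral_ofReal, integral_Icc_eq_integral_Ioc,
    ← intervalIntegral.integral_of_le zero_le_one]
  · rw [intervalIntegral.integral_comp_sub_left (fun x : ℝ ↦ x)]
    norm_num
  · exact (continuous_const.sub continuous_id).integrableOn_Icc
  · filter_upwards [ae_restrict_mem measurableSet_Icc] with x hx
    exact sub_nonneg.mpr hx.2

theorem volume_convexHull_triangle (a b c : ℝ × ℝ) :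
    volume (convexHull ℝ {a, b, c}) =
      ENNReal.ofReal (|(b.1 - a.1) * (c.2 - a.2) - (b.2 - a.2) * (c.1 - a.1)| / 2) := by
  set L := Matrix.toLin (Module.Basis.finTwoProd ℝ) (Module.Basis.finTwoProd ℝ)
    !![b.1 - a.1, c.1 - a.1; b.2 - a.2, c.2 - a.2]
  have hvertices : ({a, b, c} : Set (ℝ × ℝ)) = a +ᵥ L '' {((0 : ℝ), (0 : ℝ)), (1, 0), (0, 1)} := by
    have ha : a +ᵥ L (0, 0) = a := by ext <;> simp [L, Matrix.toLin_finTwoProd_apply]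
    have hb : a +ᵥ L (1, 0) = b := by ext <;> simp [L, Matrix.toLin_finTwoProd_apply]
    have hc : a +ᵥ L (0, 1) = c := by ext <;> simp [L, Matrix.toLin_finTwoProd_apply]
    simp only [image_insert_eq, image_singleton, vadd_set_insert, vadd_set_singleton, ha, hb, hc]
  rw [hvertices, convexHull_vadd, measure_vadd, ← LinearMap.image_convexHull,
    Measure.addHaar_image_linearMap, LinearMap.det_toLin, Matrix.det_fin_two_of,
    volume_convexHull_unitTriangle, ← ENNReal.ofReal_mul (abs_nonneg _), mul_one_div]
  congr 3
  ring

noncomputable def ofProd : (ℝ × ℝ) ≃L[ℝ] EuclideanSpace ℝ (Fin 2) :=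
  (ContinuousLinearEquiv.finTwoArrow ℝ ℝ).symm.trans (EuclideanSpace.equiv (Fin 2) ℝ).symm

theorem measurePreserving_ofProd : MeasurePreserving ofProd :=
  (PiLp.volume_preserving_toLp (Fin 2)).comp (volume_preserving_finTwoArrow ℝ).symm

theorem volume_convexHull_image_ofProd (s : Set (ℝ × ℝ)) :
    volume (convexHull ℝ (ofProd '' s)) = volume (convexHull ℝ s) := by
  have himage : convexHull ℝ (ofProd '' s) = ofProd '' convexHull ℝ s :=
    ((ofProd : ℝ × ℝ →ₗ[ℝ] EuclideanSpace ℝ (Fin 2)).image_convexHull s).symm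
  have hemb : MeasurableEmbedding ofProd := ofProd.toHomeomorph.measurableEmbedding
  rw [himage, ← measurePreserving_ofProd.map_eq, hemb.map_apply]
  exact congrArg volume (preimage_image_eq _ ofProd.injective)

theorem dist_ofProd_eq {p q : ℝ × ℝ} {r : ℝ} (hr : 0 ≤ r)
    (h : (p.1 - q.1) ^ 2 + (p.2 - q.2) ^ 2 = r ^ 2) : dist (ofProd p) (ofProd q) = r := by
  rw [EuclideanSpace.dist_eq, Fin.sum_univ_two]
  simp [ofProd, Real.dist_eq, sq_abs, h, Real.sqrt_sq hr]

noncomputable def pA : ℝ × ℝ := (65 / 18, 0)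
noncomputable def pB : ℝ × ℝ := (2047 / 1170, 616 / 195)
noncomputable def pC : ℝ × ℝ := (-65 / 18, 0)
noncomputable def pD : ℝ × ℝ := (-91 / 90, -52 / 15)
noncomputable def pE : ℝ × ℝ := (595 / 234, -100 / 39)

/-- The half-planes are bounded by the lines `AB`, `BC`, `CD`, `DE`, `EA`. -/
def pentagonRegion : Set (ℝ × ℝ) :=
  halfPlane 56 33 (1820 / 9) ∩ halfPlane (-33) 56 (715 / 6) ∩ halfPlane (-4) (-3) (130 / 9) ∩
    halfPlane 16 (-63) (1820 / 9) ∩ halfPlane 12 (-5) (130 / 3)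

theorem convexHull_pentagon_subset_pentagonRegion :
    convexHull ℝ {pA, pB, pC, pD, pE} ⊆ pentagonRegion := by
  refine convexHull_min ?_ ?_
  · rintro p (rfl | rfl | rfl | rfl | rfl) <;>
      norm_num [pentagonRegion, halfPlane, pA, pB, pC, pD, pE]
  · exact ((((convex_halfPlane _ _ _).inter (convex_halfPlane _ _ _)).inter
      (convex_halfPlane _ _ _)).inter (convex_halfPlane _ _ _)).inter (convex_halfPlane _ _ _)

theorem pentagonRegion_subset_triangles :
    pentagonRegion ⊆ convexHull ℝ {pA, pB, pC} ∪
      (convexHull ℝ {pA, pC, pD} ∪ convexHull ℝ {pA, pD, pE}) := by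
  rintro ⟨x, y⟩ ⟨⟨⟨⟨hAB, hBC⟩, hCD⟩, hDE⟩, hEA⟩
  simp only [halfPlane, mem_ofPred_eq] at hAB hBC hCD hDE hEA
  -- The weights are the barycentric coordinates of `(x, y)` in the triangle containing it.
  rcases le_total 0 y with hy | hy
  · left
    convert smul_add_smul_add_smul_mem_convexHull pA pB pC (α := 9/65*x - 168/715*y + 1/2)
      (β := 195/616*y) (γ := -(9/65)*x - 297/3640*y + 1/2) (by linarith) (by linarith)
      (by linarith) (by ring) using 1
    simp only [pA, pB, pC, Prod.smul_mk, smul_eq_mul, Prod.mk_add_mk, Prod.mk.injEq]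
    constructor <;> ring
  rcases le_total (3 * x - 4 * y) (65 / 6) with hAD | hAD
  · right; left
    convert smul_add_smul_add_smul_mem_convexHull pA pC pD (α := 9/65*x + 27/260*y + 1/2)
      (β := -(9/65)*x + 12/65*y + 1/2) (γ := -(15/52)*y) (by linarith) (by linarith)
      (by linarith) (by ring) using 1
    simp only [pA, pC, pD, Prod.smul_mk, smul_eq_mul, Prod.mk_add_mk, Prod.mk.injEq]
    constructor <;> ring
  · right; right
    convert smul_add_smul_add_smul_mem_convexHull pA pD pE (α := -(36/325)*x + 567/1300*y + 7/5)
      (β := -(45/143)*x + 75/572*y + 25/22) (γ := 117/275*x - 156/275*y - 169/110)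
      (by linarith) (by linarith) (by linarith) (by ring) using 1
    simp only [pA, pD, pE, Prod.smul_mk, smul_eq_mul, Prod.mk_add_mk, Prod.mk.injEq]
    constructor <;> ring

theorem convexHull_pentagon_eq_union :
    convexHull ℝ {pA, pB, pC, pD, pE} = convexHull ℝ {pA, pB, pC} ∪
      (convexHull ℝ {pA, pC, pD} ∪ convexHull ℝ {pA, pD, pE}) := by
  refine subset_antisymm
    (convexHull_pentagon_subset_pentagonRegion.trans pentagonRegion_subset_triangles) ?_
  refine union_subset ?_ (union_subset ?_ ?_) <;> refine convexHull_mono ?_ <;>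
    intro p hp <;> simp only [mem_insert_iff, mem_singleton_iff] at hp ⊢ <;> tauto

theorem volume_convexHull_pentagon : volume (convexHull ℝ {pA, pB, pC, pD, pE}) = 28 := by
  have hmeas (s : Set (ℝ × ℝ)) (hs : s.Finite) : NullMeasurableSet (convexHull ℝ s) :=
    (hs.isCompact_convexHull (𝕜 := ℝ)).measurableSet.nullMeasurableSet
  -- `AC` lies on the line `y = 0`, `AD` on the line `3x - 4y = 65/6`.
  rw [convexHull_pentagon_eq_union,
    volume_union_of_subset_halfPlane (u := 0) (v := -1) (w := 0) (by simp)
      (convexHull_subset_halfPlane (by rintro p (rfl | rfl | rfl) <;> norm_num [pA, pB, pC]))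
      (union_subset
        (convexHull_subset_halfPlane (by rintro p (rfl | rfl | rfl) <;> norm_num [pA, pC, pD]))
        (convexHull_subset_halfPlane (by rintro p (rfl | rfl | rfl) <;> norm_num [pA, pD, pE])))
      ((hmeas _ (toFinite _)).union (hmeas _ (toFinite _))),
    volume_union_of_subset_halfPlane (u := 3) (v := -4) (w := 65 / 6) (by simp)
      (convexHull_subset_halfPlane (by rintro p (rfl | rfl | rfl) <;> norm_num [pA, pC, pD]))
      (convexHull_subset_halfPlane (by rintro p (rfl | rfl | rfl) <;> norm_num [pA, pD, pE]))
      (hmeas _ (toFinite _)),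
    volume_convexHull_triangle, volume_convexHull_triangle, volume_convexHull_triangle]
  norm_num [pA, pB, pC, pD, pE, abs_of_nonneg, ← ENNReal.ofReal_add]

end RationalPentagon

open RationalPentagon

theorem rational_pentagon_example :
    ∃ (O A B C D E : EuclideanSpace ℝ (Fin 2)),
      dist O A = 65/18 ∧ dist O B = 65/18 ∧ dist O C = 65/18 ∧
      dist O D = 65/18 ∧ dist O E = 65/18 ∧
      dist A B = 11/3 ∧ dist B C = 56/9 ∧ dist C D = 13/3 ∧
      dist D E = 11/3 ∧ dist E A = 25/9 ∧
      dist C E = 20/3 ∧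
      ({dist A C, dist B D, dist A D, dist B E} : Multiset ℝ) =
        ({65/9, 52/9, 323/45, 52/9} : Multiset ℝ) ∧
      MeasureTheory.volume
        (convexHull ℝ ({A, B, C, D, E} : Set (EuclideanSpace ℝ (Fin 2)))) = 28 := by
  have hdiagonals : ({dist (ofProd pA) (ofProd pC), dist (ofProd pB) (ofProd pD),
      dist (ofProd pA) (ofProd pD), dist (ofProd pB) (ofProd pE)} : Multiset ℝ) =
      {65 / 9, 52 / 9, 323 / 45, 52 / 9} := by
    rw [dist_ofProd_eq (r := 65 / 9), dist_ofProd_eq (r := 323 / 45),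
      dist_ofProd_eq (r := 52 / 9), dist_ofProd_eq (r := 52 / 9)]
    · exact congrArg _ (Multiset.cons_swap _ _ _)
    all_goals norm_num [pA, pB, pC, pD, pE]
  have hvol :
      volume (convexHull ℝ {ofProd pA, ofProd pB, ofProd pC, ofProd pD, ofProd pE}) = 28 := by
    simp only [← image_singleton, ← image_insert_eq, volume_convexHull_image_ofProd,
      volume_convexHull_pentagon]
  refine ⟨ofProd 0, ofProd pA, ofProd pB, ofProd pC, ofProd pD, ofProd pE,
    ?_, ?_, ?_, ?_, ?_, ?_, ?_, ?_, ?_, ?_, ?_, hdiagonals, hvol⟩ <;>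
    apply dist_ofProd_eq <;> norm_num [pA, pB, pC, pD, pE]
end
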